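/- arXiv:1406.1563 — 7 statements merged into one kernel-verified Lean document; each statement's English description precedes it below -/
import Mathlib

section
/- Let com⁺ denote the transitive closure of com. Then com⁺ = com ∪ (co;rf) ∪ (fr;rf), i.e., for all events x and y, com⁺ x y holds if and only if com x y, or there exists p with co x p and rf p y, or there exists p with fr x p and rf p y. -/
/-! Every composite of two `com` steps collapses back into `com ∪ (co;rf) ∪ (fr;rf)`: `co` and `rf`
leave writes while `rf` enters reads and `co`, `fr` enter writes, so `rf;co`, `rf;rf`, `co;fr` and
`fr;fr` are empty; `co;co ⊆ co` and `fr;co ⊆ fr` by transitivity of `co`; and `rf;fr ⊆ co` because a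
read has a unique `rf`-source. Hence that union is closed under appending a `com` step. -/

theorem Relation.transGen_iff_of_tail_closed {α : Type*} {r s : α → α → Prop}
    (hrs : ∀ a b, r a b → s a b) (hs : ∀ a b, s a b → Relation.TransGen r a b)
    (htail : ∀ a b c, s a b → r b c → s a c) (a b : α) :
    Relation.TransGen r a b ↔ s a b := by
  refine ⟨fun h => ?_, hs a b⟩
  induction h with
  | single hab => exact hrs _ _ hab
  | tail _ hbc ih => exact htail _ _ _ ih hbc

section Execution

variable {E : Type*} {W Rd : E → Prop} {co rf fr com : E → E → Prop}

theorem fr_of_fr_of_co (hco_trans : ∀ x y z, co x y → co y z → co x z)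
    (hfr : ∀ r w, fr r w ↔ ∃ w', rf w' r ∧ co w' w) {x y z : E}
    (hxy : fr x y) (hyz : co y z) : fr x z := by
  obtain ⟨w, hwx, hwy⟩ := (hfr x y).mp hxy
  exact (hfr x z).mpr ⟨w, hwx, hco_trans _ _ _ hwy hyz⟩

theorem co_of_rf_of_fr (hrf_unique : ∀ w w' r, rf w r → rf w' r → w = w')
    (hfr : ∀ r w, fr r w ↔ ∃ w', rf w' r ∧ co w' w) {w r z : E}
    (hwr : rf w r) (hrz : fr r z) : co w z := by
  obtain ⟨w', hw'r, hw'z⟩ := (hfr r z).mp hrz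
  rwa [hrf_unique w w' r hwr hw'r]

theorem isWrite_of_fr (hco_W : ∀ x y, co x y → W x ∧ W y)
    (hfr : ∀ r w, fr r w ↔ ∃ w', rf w' r ∧ co w' w) {r w : E} (h : fr r w) : W w := by
  obtain ⟨w', -, hw'w⟩ := (hfr r w).mp h
  exact (hco_W _ _ hw'w).2

theorem isRead_of_fr (hrf_W_Rd : ∀ w r, rf w r → W w ∧ Rd r)
    (hfr : ∀ r w, fr r w ↔ ∃ w', rf w' r ∧ co w' w) {r w : E} (h : fr r w) : Rd r := by
  obtain ⟨w', hw'r, -⟩ := (hfr r w).mp h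
  exact (hrf_W_Rd _ _ hw'r).2

variable (hdisj : ∀ e, ¬ (W e ∧ Rd e)) (hco_W : ∀ x y, co x y → W x ∧ W y)
  (hrf_W_Rd : ∀ w r, rf w r → W w ∧ Rd r) (hfr : ∀ r w, fr r w ↔ ∃ w', rf w' r ∧ co w' w)
  (hcom : ∀ x y, com x y ↔ co x y ∨ rf x y ∨ fr x y)

include hdisj hrf_W_Rd hcom in
theorem co_or_fr_of_isWrite {x y : E} (hy : W y)
    (h : com x y ∨ (∃ p, co x p ∧ rf p y) ∨ (∃ p, fr x p ∧ rf p y)) : co x y ∨ fr x y := by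
  have not_rf : ∀ p, ¬ rf p y := fun p hpy => hdisj y ⟨hy, (hrf_W_Rd p y hpy).2⟩
  rcases h with hxy | ⟨p, -, hpy⟩ | ⟨p, -, hpy⟩
  · rcases (hcom x y).mp hxy with hco | hrf | hfr'
    · exact .inl hco
    · exact absurd hrf (not_rf x)
    · exact .inr hfr'
  all_goals exact absurd hpy (not_rf p)

include hdisj hco_W hfr hcom in
theorem exists_rf_of_isRead {x y : E} (hy : Rd y)
    (h : com x y ∨ (∃ p, co x p ∧ rf p y) ∨ (∃ p, fr x p ∧ rf p y)) :
    ∃ w, rf w y ∧ (x = w ∨ co x w ∨ fr x w) := by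
  rcases h with hxy | ⟨p, hxp, hpy⟩ | ⟨p, hxp, hpy⟩
  · rcases (hcom x y).mp hxy with hco | hrf | hfr'
    · exact absurd ⟨(hco_W x y hco).2, hy⟩ (hdisj y)
    · exact ⟨x, hrf, .inl rfl⟩
    · exact absurd ⟨isWrite_of_fr hco_W hfr hfr', hy⟩ (hdisj y)
  · exact ⟨p, hpy, .inr (.inl hxp)⟩
  · exact ⟨p, hpy, .inr (.inr hxp)⟩

include hdisj hco_W hrf_W_Rd hfr hcom in
theorem com_or_comp_rf_tail_closed (hco_trans : ∀ x y z, co x y → co y z → co x z)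
    (hrf_unique : ∀ w w' r, rf w r → rf w' r → w = w') {x y z : E}
    (h : com x y ∨ (∃ p, co x p ∧ rf p y) ∨ (∃ p, fr x p ∧ rf p y)) (hyz : com y z) :
    com x z ∨ (∃ p, co x p ∧ rf p z) ∨ (∃ p, fr x p ∧ rf p z) := by
  rcases (hcom y z).mp hyz with hco | hrf | hfr'
  · rcases co_or_fr_of_isWrite hdisj hrf_W_Rd hcom (hco_W y z hco).1 h with hxy | hxy
    · exact .inl ((hcom x z).mpr (.inl (hco_trans _ _ _ hxy hco)))
    · exact .inl ((hcom x z).mpr (.inr (.inr (fr_of_fr_of_co hco_trans hfr hxy hco))))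
  · rcases co_or_fr_of_isWrite hdisj hrf_W_Rd hcom (hrf_W_Rd y z hrf).1 h with hxy | hxy
    · exact .inr (.inl ⟨y, hxy, hrf⟩)
    · exact .inr (.inr ⟨y, hxy, hrf⟩)
  · obtain ⟨w, hwy, hxw⟩ :=
      exists_rf_of_isRead hdisj hco_W hfr hcom (isRead_of_fr hrf_W_Rd hfr hfr') h
    have hwz : co w z := co_of_rf_of_fr hrf_unique hfr hwy hfr'
    refine .inl ((hcom x z).mpr ?_)
    rcases hxw with rfl | hxw | hxw
    · exact .inl hwz
    · exact .inl (hco_trans _ _ _ hxw hwz)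
    · exact .inr (.inr (fr_of_fr_of_co hco_trans hfr hxw hwz))

end Execution

theorem com_plus_characterization_general {E A : Type*} (W Rd : E → Prop) (addr : E → A)
    (co rf fr com : E → E → Prop)
    (hdisj : ∀ e, ¬ (W e ∧ Rd e))
    (hco_trans : ∀ x y z, co x y → co y z → co x z)
    (hco_wf : ∀ x y, co x y → W x ∧ W y ∧ addr x = addr y)
    (hrf_wf : ∀ w r, rf w r → W w ∧ Rd r ∧ addr w = addr r)
    (hrf_ex : ∀ r, Rd r → ∃! w, rf w r)
    (hfr : ∀ r w, fr r w ↔ ∃ w', rf w' r ∧ co w' w)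
    (hcom : ∀ x y, com x y ↔ co x y ∨ rf x y ∨ fr x y) :
    ∀ x y, Relation.TransGen com x y ↔ (com x y ∨ (∃ p, co x p ∧ rf p y) ∨ (∃ p, fr x p ∧ rf p y)) := by
  have hrf_W_Rd : ∀ w r, rf w r → W w ∧ Rd r := fun w r h => ⟨(hrf_wf w r h).1, (hrf_wf w r h).2.1⟩
  have hrf_unique : ∀ w w' r, rf w r → rf w' r → w = w' := fun w w' r hw hw' =>
    (hrf_ex r (hrf_W_Rd w r hw).2).unique hw hw'
  refine Relation.transGen_iff_of_tail_closed (fun _ _ => .inl) ?_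
    (fun _ _ _ => com_or_comp_rf_tail_closed hdisj
      (fun x y h => ⟨(hco_wf x y h).1, (hco_wf x y h).2.1⟩) hrf_W_Rd hfr hcom hco_trans hrf_unique)
  rintro x y (hxy | ⟨p, hxp, hpy⟩ | ⟨p, hxp, hpy⟩)
  · exact .single hxy
  · exact .head ((hcom x p).mpr (.inl hxp)) (.single ((hcom p y).mpr (.inr (.inl hpy))))
  · exact .head ((hcom x p).mpr (.inr (.inr hxp))) (.single ((hcom p y).mpr (.inr (.inl hpy))))

theorem com_plus_characterization {E A : Type*} (W Rd : E → Prop) (addr : E → A)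
    (co rf fr com : E → E → Prop)
    (hdisj : ∀ e, ¬ (W e ∧ Rd e))
    (hco_irr : ∀ x, ¬ co x x)
    (hco_trans : ∀ x y z, co x y → co y z → co x z)
    (hco_wf : ∀ x y, co x y → W x ∧ W y ∧ addr x = addr y)
    (hco_total : ∀ x y, W x → W y → addr x = addr y → co x y ∨ x = y ∨ co y x)
    (hrf_wf : ∀ w r, rf w r → W w ∧ Rd r ∧ addr w = addr r)
    (hrf_ex : ∀ r, Rd r → ∃! w, rf w r)
    (hfr : ∀ r w, fr r w ↔ ∃ w', rf w' r ∧ co w' w)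
    (hcom : ∀ x y, com x y ↔ co x y ∨ rf x y ∨ fr x y) :
    ∀ x y, Relation.TransGen com x y ↔ (com x y ∨ (∃ p, co x p ∧ rf p y) ∨ (∃ p, fr x p ∧ rf p y)) :=
  com_plus_characterization_general W Rd addr co rf fr com hdisj hco_trans hco_wf hrf_wf hrf_ex hfr
    hcom
end

section
/- The transitive closure com⁺ of com is irreflexive: for no event x does com⁺ x x hold. -/
/-!
Send every event to the write it observes: a read to the write it reads from, any other event to
itself. Along a `co` or `fr` edge the observed write strictly increases in `co`, along an `rf` edge
it stays the same. An `rf` edge ends in a read, and only `fr` edges leave a read, so a `com⁺` path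
either strictly increases the observed write or is a single `rf` edge. Neither can close a cycle:
`co` is irreflexive and transitive, and no event is both a write and a read.
-/

open Relation

section

variable {E : Type*}

noncomputable def observedWrite (rf : E → E → Prop) (e : E) : E :=
  open Classical in if h : ∃ w, rf w e then h.choose else e

theorem observedWrite_of_forall_not_rf {rf : E → E → Prop} {e : E} (h : ∀ w, ¬ rf w e) :
    observedWrite rf e = e :=
  dif_neg (not_exists.2 h)

theorem observedWrite_of_rf {rf : E → E → Prop}
    (hrf_unique : ∀ w w' r, rf w r → rf w' r → w = w') {w e : E} (h : rf w e) :
    observedWrite rf e = w := by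
  have hex : ∃ w, rf w e := ⟨w, h⟩
  rw [observedWrite, dif_pos hex]
  exact hrf_unique _ _ _ hex.choose_spec h

variable {W Rd : E → Prop} {co rf com : E → E → Prop}

theorem observedWrite_of_write (hdisj : ∀ e, ¬ (W e ∧ Rd e))
    (hrf : ∀ w r, rf w r → W w ∧ Rd r) {e : E} (he : W e) :
    observedWrite rf e = e :=
  observedWrite_of_forall_not_rf fun w hw => hdisj e ⟨he, (hrf w e hw).2⟩

theorem observedWrite_co_of_com_or_rf (hdisj : ∀ e, ¬ (W e ∧ Rd e))
    (hco : ∀ x y, co x y → W x ∧ W y) (hrf : ∀ w r, rf w r → W w ∧ Rd r)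
    (hrf_unique : ∀ w w' r, rf w r → rf w' r → w = w')
    (hcom : ∀ x y, com x y → co x y ∨ rf x y ∨ ∃ w, rf w x ∧ co w y)
    {x y : E} (h : com x y) :
    co (observedWrite rf x) (observedWrite rf y) ∨ rf x y := by
  rcases hcom x y h with hxy | hxy | ⟨w, hwx, hwy⟩
  · rw [observedWrite_of_write hdisj hrf (hco x y hxy).1,
      observedWrite_of_write hdisj hrf (hco x y hxy).2]
    exact Or.inl hxy
  · exact Or.inr hxy
  · rw [observedWrite_of_rf hrf_unique hwx, observedWrite_of_write hdisj hrf (hco w y hwy).2]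
    exact Or.inl hwy

theorem observedWrite_co_of_com_of_read (hdisj : ∀ e, ¬ (W e ∧ Rd e))
    (hco : ∀ x y, co x y → W x ∧ W y) (hrf : ∀ w r, rf w r → W w ∧ Rd r)
    (hrf_unique : ∀ w w' r, rf w r → rf w' r → w = w')
    (hcom : ∀ x y, com x y → co x y ∨ rf x y ∨ ∃ w, rf w x ∧ co w y)
    {x y : E} (hx : Rd x) (h : com x y) :
    co (observedWrite rf x) (observedWrite rf y) :=
  (observedWrite_co_of_com_or_rf hdisj hco hrf hrf_unique hcom h).resolve_right
    fun hxy => hdisj x ⟨(hrf x y hxy).1, hx⟩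

theorem observedWrite_co_of_transGen_com_or_rf (hdisj : ∀ e, ¬ (W e ∧ Rd e))
    (hco_trans : ∀ x y z, co x y → co y z → co x z)
    (hco : ∀ x y, co x y → W x ∧ W y) (hrf : ∀ w r, rf w r → W w ∧ Rd r)
    (hrf_unique : ∀ w w' r, rf w r → rf w' r → w = w')
    (hcom : ∀ x y, com x y → co x y ∨ rf x y ∨ ∃ w, rf w x ∧ co w y)
    {x y : E} (h : TransGen com x y) :
    co (observedWrite rf x) (observedWrite rf y) ∨ rf x y := by
  induction h with
  | single hxy => exact observedWrite_co_of_com_or_rf hdisj hco hrf hrf_unique hcom hxy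
  | @tail b c _ hbc ih =>
    left
    rcases ih with hxb | hxb
    · rcases observedWrite_co_of_com_or_rf hdisj hco hrf hrf_unique hcom hbc with hbc | hbc
      · exact hco_trans _ _ _ hxb hbc
      · have hcb : observedWrite rf c = observedWrite rf b := by
          rw [observedWrite_of_rf hrf_unique hbc, observedWrite_of_write hdisj hrf (hrf b c hbc).1]
        exact hcb ▸ hxb
    · have hbx : observedWrite rf b = observedWrite rf x := by
        rw [observedWrite_of_rf hrf_unique hxb, observedWrite_of_write hdisj hrf (hrf x b hxb).1]
      exact hbx ▸ observedWrite_co_of_com_of_read hdisj hco hrf hrf_unique hcom (hrf x b hxb).2 hbc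

end

theorem com_plus_irreflexive_general {E A : Type*} (W Rd : E → Prop) (addr : E → A)
    (co rf fr com : E → E → Prop)
    (hdisj : ∀ e, ¬ (W e ∧ Rd e))
    (hco_irr : ∀ x, ¬ co x x)
    (hco_trans : ∀ x y z, co x y → co y z → co x z)
    (hco_wf : ∀ x y, co x y → W x ∧ W y ∧ addr x = addr y)
    (hrf_wf : ∀ w r, rf w r → W w ∧ Rd r ∧ addr w = addr r)
    (hrf_ex : ∀ r, Rd r → ∃! w, rf w r)
    (hfr : ∀ r w, fr r w ↔ ∃ w', rf w' r ∧ co w' w)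
    (hcom : ∀ x y, com x y ↔ co x y ∨ rf x y ∨ fr x y) :
    ∀ x, ¬ Relation.TransGen com x x := by
  have hco x y (h : co x y) : W x ∧ W y := ⟨(hco_wf x y h).1, (hco_wf x y h).2.1⟩
  have hrf w r (h : rf w r) : W w ∧ Rd r := ⟨(hrf_wf w r h).1, (hrf_wf w r h).2.1⟩
  have hrf_unique w w' r (hw : rf w r) (hw' : rf w' r) : w = w' :=
    (hrf_ex r (hrf w r hw).2).unique hw hw'
  have hcom' x y (h : com x y) : co x y ∨ rf x y ∨ ∃ w, rf w x ∧ co w y := by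
    rwa [hcom, hfr] at h
  intro x hx
  rcases observedWrite_co_of_transGen_com_or_rf hdisj hco_trans hco hrf hrf_unique hcom' hx
    with h | h
  · exact hco_irr _ h
  · exact hdisj x (hrf x x h)

theorem com_plus_irreflexive {E A : Type*} (W Rd : E → Prop) (addr : E → A)
    (co rf fr com : E → E → Prop)
    (hdisj : ∀ e, ¬ (W e ∧ Rd e))
    (hco_irr : ∀ x, ¬ co x x)
    (hco_trans : ∀ x y z, co x y → co y z → co x z)
    (hco_wf : ∀ x y, co x y → W x ∧ W y ∧ addr x = addr y)
    (hco_total : ∀ x y, W x → W y → addr x = addr y → co x y ∨ x = y ∨ co y x)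
    (hrf_wf : ∀ w r, rf w r → W w ∧ Rd r ∧ addr w = addr r)
    (hrf_ex : ∀ r, Rd r → ∃! w, rf w r)
    (hfr : ∀ r w, fr r w ↔ ∃ w', rf w' r ∧ co w' w)
    (hcom : ∀ x y, com x y ↔ co x y ∨ rf x y ∨ fr x y) :
    ∀ x, ¬ Relation.TransGen com x x :=
  com_plus_irreflexive_general W Rd addr co rf fr com hdisj hco_irr hco_trans hco_wf hrf_wf hrf_ex
    hfr hcom
end

section
/- (Totality of com⁺.) Let x and y be events, each of which is a read or a write, with addr x = addr y. Then at least one of the following holds: (1) com⁺ x y; (2) x and y are both writes and x = y; (3) x and y are both reads and they read from the same write (i.e., there is a write w with rf w x and rf w y); (4) com⁺ y x. -/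
/-!
Attach to every event `x` its source write: `x` itself if it is a write, and the write it reads
from if it is a read; in both cases `ReflGen rf w x`. Two events at the same address have
co-comparable sources. If the source of `x` is co-before that of `y`, then `x` reaches the later
source by one `co` or `fr` step and from there reaches `y` by at most one `rf` step. If the sources
coincide, the events are equal writes, a write and a read from it, or two reads from it.
-/

open Relation

section SourceWrite

variable {E A : Type*} {W Rd : E → Prop} {co rf fr com : E → E → Prop}

theorem exists_source_write (addr : E → A)
    (hrf_wf : ∀ w r, rf w r → W w ∧ Rd r ∧ addr w = addr r)
    (hrf_ex : ∀ r, Rd r → ∃! w, rf w r) {x : E} (hx : Rd x ∨ W x) :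
    ∃ w, W w ∧ addr w = addr x ∧ ReflGen rf w x := by
  rcases hx with hxR | hxW
  · obtain ⟨w, hw, -⟩ := hrf_ex x hxR
    obtain ⟨hwW, -, hwa⟩ := hrf_wf w x hw
    exact ⟨w, hwW, hwa, .single hw⟩
  · exact ⟨x, hxW, rfl, .refl⟩

theorem com_of_source_co (hfr : ∀ r w, fr r w ↔ ∃ w', rf w' r ∧ co w' w)
    (hcom : ∀ x y, com x y ↔ co x y ∨ rf x y ∨ fr x y) {w w' x : E}
    (hx : ReflGen rf w x) (hww' : co w w') : com x w' := by
  rcases hx with _ | hrf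
  · exact (hcom _ _).2 (.inl hww')
  · exact (hcom _ _).2 (.inr (.inr ((hfr _ _).2 ⟨w, hrf, hww'⟩)))

theorem reflGen_com_of_reflGen_rf (hcom : ∀ x y, com x y ↔ co x y ∨ rf x y ∨ fr x y)
    {w x : E} (hx : ReflGen rf w x) : ReflGen com w x :=
  ReflGen.mono (fun a b h => (hcom a b).2 (.inr (.inl h))) w x hx

theorem transGen_com_of_source_co (hfr : ∀ r w, fr r w ↔ ∃ w', rf w' r ∧ co w' w)
    (hcom : ∀ x y, com x y ↔ co x y ∨ rf x y ∨ fr x y) {w w' x y : E}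
    (hx : ReflGen rf w x) (hy : ReflGen rf w' y) (hww' : co w w') : TransGen com x y :=
  .head' (com_of_source_co hfr hcom hx hww')
    (reflGen_com_of_reflGen_rf hcom hy).to_reflTransGen

theorem com_trichotomy_of_same_source (addr : E → A)
    (hrf_wf : ∀ w r, rf w r → W w ∧ Rd r ∧ addr w = addr r)
    (hcom : ∀ x y, com x y ↔ co x y ∨ rf x y ∨ fr x y) {w x y : E} (hw : W w)
    (hx : ReflGen rf w x) (hy : ReflGen rf w y) :
    com x y ∨ (W x ∧ W y ∧ x = y) ∨ (Rd x ∧ Rd y ∧ ∃ w, W w ∧ rf w x ∧ rf w y) ∨ com y x := by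
  rcases hx with _ | hx <;> rcases hy with _ | hy
  · exact .inr (.inl ⟨hw, hw, rfl⟩)
  · exact .inl ((hcom _ _).2 (.inr (.inl hy)))
  · exact .inr (.inr (.inr ((hcom _ _).2 (.inr (.inl hx)))))
  · exact .inr (.inr (.inl ⟨(hrf_wf _ _ hx).2.1, (hrf_wf _ _ hy).2.1, w, hw, hx, hy⟩))

end SourceWrite

theorem com_plus_total_general {E A : Type*} (W Rd : E → Prop) (addr : E → A)
    (co rf fr com : E → E → Prop)
    (hco_total : ∀ x y, W x → W y → addr x = addr y → co x y ∨ x = y ∨ co y x)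
    (hrf_wf : ∀ w r, rf w r → W w ∧ Rd r ∧ addr w = addr r)
    (hrf_ex : ∀ r, Rd r → ∃! w, rf w r)
    (hfr : ∀ r w, fr r w ↔ ∃ w', rf w' r ∧ co w' w)
    (hcom : ∀ x y, com x y ↔ co x y ∨ rf x y ∨ fr x y) :
    ∀ x y, (Rd x ∨ W x) → (Rd y ∨ W y) → addr x = addr y →
      Relation.TransGen com x y ∨
      (W x ∧ W y ∧ x = y) ∨
      (Rd x ∧ Rd y ∧ ∃ w, W w ∧ rf w x ∧ rf w y) ∨
      Relation.TransGen com y x := by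
  intro x y hx hy haddr
  obtain ⟨wx, hwxW, hwxa, hwx⟩ := exists_source_write addr hrf_wf hrf_ex hx
  obtain ⟨wy, hwyW, hwya, hwy⟩ := exists_source_write addr hrf_wf hrf_ex hy
  rcases hco_total wx wy hwxW hwyW (by rw [hwxa, hwya, haddr]) with hco | rfl | hco
  · exact .inl (transGen_com_of_source_co hfr hcom hwx hwy hco)
  · rcases com_trichotomy_of_same_source addr hrf_wf hcom hwxW hwx hwy with h | h | h | h
    · exact .inl (.single h)
    · exact .inr (.inl h)
    · exact .inr (.inr (.inl h))
    · exact .inr (.inr (.inr (.single h)))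
  · exact .inr (.inr (.inr (transGen_com_of_source_co hfr hcom hwy hwx hco)))

theorem com_plus_total {E A : Type*} (W Rd : E → Prop) (addr : E → A)
    (co rf fr com : E → E → Prop)
    (hdisj : ∀ e, ¬ (W e ∧ Rd e))
    (hco_irr : ∀ x, ¬ co x x)
    (hco_trans : ∀ x y z, co x y → co y z → co x z)
    (hco_wf : ∀ x y, co x y → W x ∧ W y ∧ addr x = addr y)
    (hco_total : ∀ x y, W x → W y → addr x = addr y → co x y ∨ x = y ∨ co y x)
    (hrf_wf : ∀ w r, rf w r → W w ∧ Rd r ∧ addr w = addr r)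
    (hrf_ex : ∀ r, Rd r → ∃! w, rf w r)
    (hfr : ∀ r w, fr r w ↔ ∃ w', rf w' r ∧ co w' w)
    (hcom : ∀ x y, com x y ↔ co x y ∨ rf x y ∨ fr x y) :
    ∀ x y, (Rd x ∨ W x) → (Rd y ∨ W y) → addr x = addr y →
      Relation.TransGen com x y ∨
      (W x ∧ W y ∧ x = y) ∨
      (Rd x ∧ Rd y ∧ ∃ w, W w ∧ rf w x ∧ rf w y) ∨
      Relation.TransGen com y x :=
  com_plus_total_general W Rd addr co rf fr com hco_total hrf_wf hrf_ex hfr hcom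
end

section
/- (Read-source substitution, left version.) If x and y are reads that read from the same write (i.e., there is a write w with rf w x and rf w y), and com⁺ x z for some event z, then com⁺ y z. -/
/-! A read is the source of no `co` or `rf` edge, so every `com` edge out of `x` is an `fr` edge,
determined by the unique write `x` reads from. Since `y` reads from the same write, `y` has the
same `fr` edges, hence the first step of any `com⁺` path from `x` can be taken from `y` instead. -/

theorem Relation.TransGen.of_forall_imp_head {α : Type*} {r : α → α → Prop} {x y z : α}
    (h : ∀ u, r x u → r y u) (hxz : Relation.TransGen r x z) : Relation.TransGen r y z := by
  obtain ⟨u, hxu, huz⟩ := Relation.TransGen.head'_iff.mp hxz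
  exact Relation.TransGen.head'_iff.mpr ⟨u, h u hxu, huz⟩

section Execution

variable {E : Type*} {W Rd : E → Prop} {co rf fr com : E → E → Prop}

theorem com_imp_of_rf_of_rf
    (hdisj : ∀ e, ¬ (W e ∧ Rd e))
    (hco_src : ∀ a b, co a b → W a)
    (hrf_src : ∀ a b, rf a b → W a)
    (hrf_unique : ∀ r w w', rf w r → rf w' r → w = w')
    (hfr : ∀ r w, fr r w ↔ ∃ w', rf w' r ∧ co w' w)
    (hcom : ∀ a b, com a b ↔ co a b ∨ rf a b ∨ fr a b)
    {w x y : E} (hx : Rd x) (hwx : rf w x) (hwy : rf w y) {u : E} (hxu : com x u) :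
    com y u := by
  rcases (hcom x u).1 hxu with hco | hrf | hfr_xu
  · exact absurd ⟨hco_src x u hco, hx⟩ (hdisj x)
  · exact absurd ⟨hrf_src x u hrf, hx⟩ (hdisj x)
  · obtain ⟨w', hw'x, hw'u⟩ := (hfr x u).1 hfr_xu
    obtain rfl := hrf_unique x w' w hw'x hwx
    exact (hcom y u).2 (Or.inr (Or.inr ((hfr y u).2 ⟨w', hwy, hw'u⟩)))

end Execution

theorem read_source_subst_left_general {E A : Type*} (W Rd : E → Prop) (addr : E → A)
    (co rf fr com : E → E → Prop)
    (hdisj : ∀ e, ¬ (W e ∧ Rd e))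
    (hco_wf : ∀ x y, co x y → W x ∧ W y ∧ addr x = addr y)
    (hrf_wf : ∀ w r, rf w r → W w ∧ Rd r ∧ addr w = addr r)
    (hrf_ex : ∀ r, Rd r → ∃! w, rf w r)
    (hfr : ∀ r w, fr r w ↔ ∃ w', rf w' r ∧ co w' w)
    (hcom : ∀ x y, com x y ↔ co x y ∨ rf x y ∨ fr x y) :
    ∀ x y z, Rd x → Rd y → (∃ w, W w ∧ rf w x ∧ rf w y) → Relation.TransGen com x z → Relation.TransGen com y z := by
  intro x y z hx _ ⟨w, _, hwx, hwy⟩ hxz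
  have hrf_unique : ∀ r w w', rf w r → rf w' r → w = w' := fun r w w' hw hw' =>
    (hrf_ex r (hrf_wf w r hw).2.1).unique hw hw'
  exact hxz.of_forall_imp_head fun u =>
    com_imp_of_rf_of_rf hdisj (fun a b h => (hco_wf a b h).1) (fun a b h => (hrf_wf a b h).1)
      hrf_unique hfr hcom hx hwx hwy

theorem read_source_subst_left {E A : Type*} (W Rd : E → Prop) (addr : E → A)
    (co rf fr com : E → E → Prop)
    (hdisj : ∀ e, ¬ (W e ∧ Rd e))
    (hco_irr : ∀ x, ¬ co x x)
    (hco_trans : ∀ x y z, co x y → co y z → co x z)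
    (hco_wf : ∀ x y, co x y → W x ∧ W y ∧ addr x = addr y)
    (hco_total : ∀ x y, W x → W y → addr x = addr y → co x y ∨ x = y ∨ co y x)
    (hrf_wf : ∀ w r, rf w r → W w ∧ Rd r ∧ addr w = addr r)
    (hrf_ex : ∀ r, Rd r → ∃! w, rf w r)
    (hfr : ∀ r w, fr r w ↔ ∃ w', rf w' r ∧ co w' w)
    (hcom : ∀ x y, com x y ↔ co x y ∨ rf x y ∨ fr x y) :
    ∀ x y z, Rd x → Rd y → (∃ w, W w ∧ rf w x ∧ rf w y) → Relation.TransGen com x z → Relation.TransGen com y z :=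
  read_source_subst_left_general W Rd addr co rf fr com hdisj hco_wf hrf_wf hrf_ex hfr hcom
end

section
/- (Read-source substitution, right version.) If x and y are reads that read from the same write (i.e., there is a write w with rf w x and rf w y), and com⁺ z x for some event z, then com⁺ z y. -/
/-! A `com` edge into a read can only be an `rf` edge, so the last step of a `com⁺` path into `x`
leaves the unique write `w` that `x` reads from; and `w` also has a `com` edge to `y`. -/

theorem Relation.TransGen.of_forall_rel_right {α : Type*} {r : α → α → Prop} {x y z : α}
    (h : ∀ a, r a x → r a y) (hzx : Relation.TransGen r z x) : Relation.TransGen r z y := by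
  obtain ⟨a, hza, hax⟩ := Relation.TransGen.tail'_iff.mp hzx
  exact Relation.TransGen.tail' hza (h a hax)

theorem rf_of_com_of_not_write {E : Type*} (W : E → Prop) (co rf fr com : E → E → Prop)
    (hco_W : ∀ x y, co x y → W y) (hfr : ∀ r w, fr r w ↔ ∃ w', rf w' r ∧ co w' w)
    (hcom : ∀ x y, com x y ↔ co x y ∨ rf x y ∨ fr x y) {a x : E} (hx : ¬ W x)
    (hax : com a x) : rf a x := by
  rcases (hcom a x).mp hax with hco | hrf | hfr_ax
  · exact absurd (hco_W a x hco) hx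
  · exact hrf
  · obtain ⟨w', -, hco⟩ := (hfr a x).mp hfr_ax
    exact absurd (hco_W w' x hco) hx

theorem read_source_subst_right_general {E A : Type*} (W Rd : E → Prop) (addr : E → A)
    (co rf fr com : E → E → Prop)
    (hdisj : ∀ e, ¬ (W e ∧ Rd e))
    (hco_wf : ∀ x y, co x y → W x ∧ W y ∧ addr x = addr y)
    (hrf_ex : ∀ r, Rd r → ∃! w, rf w r)
    (hfr : ∀ r w, fr r w ↔ ∃ w', rf w' r ∧ co w' w)
    (hcom : ∀ x y, com x y ↔ co x y ∨ rf x y ∨ fr x y) :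
    ∀ x y z, Rd x → Rd y → (∃ w, W w ∧ rf w x ∧ rf w y) → Relation.TransGen com z x → Relation.TransGen com z y := by
  intro x y z hx _ ⟨w, _, hwx, hwy⟩
  refine Relation.TransGen.of_forall_rel_right fun a hax => ?_
  have hrf_ax : rf a x := rf_of_com_of_not_write W co rf fr com (fun u v h => (hco_wf u v h).2.1)
    hfr hcom (fun hWx => hdisj x ⟨hWx, hx⟩) hax
  obtain ⟨_, -, hsrc⟩ := hrf_ex x hx
  rw [hsrc a hrf_ax, ← hsrc w hwx]
  exact (hcom w y).mpr (Or.inr (Or.inl hwy))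

theorem read_source_subst_right {E A : Type*} (W Rd : E → Prop) (addr : E → A)
    (co rf fr com : E → E → Prop)
    (hdisj : ∀ e, ¬ (W e ∧ Rd e))
    (hco_irr : ∀ x, ¬ co x x)
    (hco_trans : ∀ x y z, co x y → co y z → co x z)
    (hco_wf : ∀ x y, co x y → W x ∧ W y ∧ addr x = addr y)
    (hco_total : ∀ x y, W x → W y → addr x = addr y → co x y ∨ x = y ∨ co y x)
    (hrf_wf : ∀ w r, rf w r → W w ∧ Rd r ∧ addr w = addr r)
    (hrf_ex : ∀ r, Rd r → ∃! w, rf w r)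
    (hfr : ∀ r w, fr r w ↔ ∃ w', rf w' r ∧ co w' w)
    (hcom : ∀ x y, com x y ↔ co x y ∨ rf x y ∨ fr x y) :
    ∀ x y z, Rd x → Rd y → (∃ w, W w ∧ rf w x ∧ rf w y) → Relation.TransGen com z x → Relation.TransGen com z y :=
  read_source_subst_right_general W Rd addr co rf fr com hdisj hco_wf hrf_ex hfr hcom
end

section
/- SC-Per-Location-2 implies SC-Per-Location: if for all events x and y, pol x y implies ¬ com⁺ y x, then the relation pol ∪ com is acyclic (i.e., its transitive closure is irreflexive). -/
/-!
Order the memory events of each location lexicographically: first by the coherence order of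
the write they take their value from, then a write before the reads of it, then reads of the
same write in program order. This is a strict order containing `com`, and by the hypothesis it
also contains `pol` between memory events: a `pol` edge against this order would yield a `com⁺`
path backwards. A cycle of `pol ∪ com` is a cycle of `com` edges and maximal
(hence transitive, so single) `pol` segments whose ends are memory events, i.e. a cycle of that
strict order.
-/

open Relation

section UnionCycle

variable {α : Type*} {p c t : α → α → Prop} {M : α → Prop}

theorem exists_reflGen_of_transGen_union (hp : ∀ x y z, p x y → p y z → p x z)
    (ht : ∀ x y z, t x y → t y z → t x z) (hct : ∀ x y, c x y → t x y) (hcM : ∀ x y, c x y → M x)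
    (htM : ∀ x y, t x y → M x ∧ M y) (hpt : ∀ x y, p x y → M x → M y → t x y) {x y : α}
    (h : TransGen (fun a b => p a b ∨ c a b) x y) :
    p x y ∨ ∃ u v, ReflGen p x u ∧ t u v ∧ ReflGen p v y := by
  induction h with
  | single hxy =>
    rcases hxy with hxy | hxy
    · exact .inl hxy
    · exact .inr ⟨x, _, .refl, hct _ _ hxy, .refl⟩
  | @tail y z _ hyz ih =>
    rcases hyz with hyz | hyz
    · rcases ih with hxy | ⟨u, v, hxu, huv, hvy⟩
      · exact .inl (hp _ _ _ hxy hyz)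
      · refine .inr ⟨u, v, hxu, huv, .single ?_⟩
        cases hvy with
        | refl => exact hyz
        | single hvy => exact hp _ _ _ hvy hyz
    · rcases ih with hxy | ⟨u, v, hxu, huv, hvy⟩
      · exact .inr ⟨y, z, .single hxy, hct _ _ hyz, .refl⟩
      · have hvy' : ReflGen t v y := by
          cases hvy with
          | refl => exact .refl
          | single hvy => exact .single (hpt _ _ hvy (htM _ _ huv).2 (hcM _ _ hyz))
        have huy : t u y := by
          cases hvy' with
          | refl => exact huv
          | single hvy' => exact ht _ _ _ huv hvy'
        exact .inr ⟨u, z, hxu, ht _ _ _ huy (hct _ _ hyz), .refl⟩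

theorem not_transGen_union_self (hp : ∀ x y z, p x y → p y z → p x z) (hp_irr : ∀ x, ¬ p x x)
    (ht : ∀ x y z, t x y → t y z → t x z) (ht_irr : ∀ x, ¬ t x x)
    (hct : ∀ x y, c x y → t x y) (hcM : ∀ x y, c x y → M x)
    (htM : ∀ x y, t x y → M x ∧ M y) (hpt : ∀ x y, p x y → M x → M y → t x y) (x : α) :
    ¬ TransGen (fun a b => p a b ∨ c a b) x x := by
  intro h
  rcases exists_reflGen_of_transGen_union hp ht hct hcM htM hpt h with hxx | ⟨u, v, hxu, huv, hvx⟩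
  · exact hp_irr x hxx
  · have hvu : ReflGen p v u := by
      cases hvx with
      | refl => exact hxu
      | single hvx =>
        cases hxu with
        | refl => exact .single hvx
        | single hxu => exact .single (hp _ _ _ hvx hxu)
    cases hvu with
    | refl => exact ht_irr u huv
    | single hvu => exact ht_irr u (ht _ _ _ huv (hpt _ _ hvu (htM _ _ huv).2 (htM _ _ huv).1))

end UnionCycle

section MemoryModel

variable {E A : Type*} {W Rd : E → Prop} {addr : E → A} {po co rf fr com pol : E → E → Prop}

def IsSourceWrite (W : E → Prop) (rf : E → E → Prop) (w x : E) : Prop :=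
  (W x ∧ w = x) ∨ rf w x

def LocationOrder (W Rd : E → Prop) (po co rf : E → E → Prop) (x y : E) : Prop :=
  (∃ wx wy, IsSourceWrite W rf wx x ∧ IsSourceWrite W rf wy y ∧ co wx wy) ∨
  (∃ w, IsSourceWrite W rf w x ∧ IsSourceWrite W rf w y ∧ ((W x ∧ Rd y) ∨ (Rd x ∧ Rd y ∧ po x y)))

namespace IsSourceWrite

variable {w w' x : E}

theorem isWrite (hrf_wf : ∀ w r, rf w r → W w ∧ Rd r ∧ addr w = addr r)
    (h : IsSourceWrite W rf w x) : W w := by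
  rcases h with ⟨hx, rfl⟩ | h
  · exact hx
  · exact (hrf_wf _ _ h).1

theorem addr_eq (hrf_wf : ∀ w r, rf w r → W w ∧ Rd r ∧ addr w = addr r)
    (h : IsSourceWrite W rf w x) : addr w = addr x := by
  rcases h with ⟨_, rfl⟩ | h
  · rfl
  · exact (hrf_wf _ _ h).2.2

theorem isMem (hrf_wf : ∀ w r, rf w r → W w ∧ Rd r ∧ addr w = addr r)
    (h : IsSourceWrite W rf w x) : W x ∨ Rd x := by
  rcases h with ⟨hx, _⟩ | h
  · exact .inl hx
  · exact .inr (hrf_wf _ _ h).2.1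

theorem eq_of_write (hdisj : ∀ e, ¬ (W e ∧ Rd e))
    (hrf_wf : ∀ w r, rf w r → W w ∧ Rd r ∧ addr w = addr r)
    (h : IsSourceWrite W rf w x) (hx : W x) : w = x := by
  rcases h with ⟨_, rfl⟩ | h
  · rfl
  · exact absurd ⟨hx, (hrf_wf _ _ h).2.1⟩ (hdisj x)

theorem rf_of_read (hdisj : ∀ e, ¬ (W e ∧ Rd e)) (h : IsSourceWrite W rf w x) (hx : Rd x) :
    rf w x := by
  rcases h with ⟨hW, _⟩ | h
  · exact absurd ⟨hW, hx⟩ (hdisj x)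
  · exact h

theorem unique (hdisj : ∀ e, ¬ (W e ∧ Rd e))
    (hrf_wf : ∀ w r, rf w r → W w ∧ Rd r ∧ addr w = addr r) (hrf_ex : ∀ r, Rd r → ∃! w, rf w r)
    (h : IsSourceWrite W rf w x) (h' : IsSourceWrite W rf w' x) : w = w' := by
  rcases h.isMem hrf_wf with hx | hx
  · rw [h.eq_of_write hdisj hrf_wf hx, h'.eq_of_write hdisj hrf_wf hx]
  · exact (hrf_ex x hx).unique (h.rf_of_read hdisj hx) (h'.rf_of_read hdisj hx)

theorem exists_of_isMem (hrf_ex : ∀ r, Rd r → ∃! w, rf w r) (hx : W x ∨ Rd x) :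
    ∃ w, IsSourceWrite W rf w x := by
  rcases hx with hx | hx
  · exact ⟨x, .inl ⟨hx, rfl⟩⟩
  · obtain ⟨w, hw, _⟩ := hrf_ex x hx
    exact ⟨w, .inr hw⟩

theorem reflTransGen_com (hcom : ∀ x y, com x y ↔ co x y ∨ rf x y ∨ fr x y)
    (h : IsSourceWrite W rf w x) : ReflTransGen com w x := by
  rcases h with ⟨_, rfl⟩ | h
  · exact .refl
  · exact .single ((hcom _ _).2 (.inr (.inl h)))

theorem com_of_co (hdisj : ∀ e, ¬ (W e ∧ Rd e))
    (hrf_wf : ∀ w r, rf w r → W w ∧ Rd r ∧ addr w = addr r)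
    (hfr : ∀ r w, fr r w ↔ ∃ w', rf w' r ∧ co w' w)
    (hcom : ∀ x y, com x y ↔ co x y ∨ rf x y ∨ fr x y)
    (h : IsSourceWrite W rf w x) (hco : co w w') : com x w' := by
  rcases h.isMem hrf_wf with hx | hx
  · exact (hcom _ _).2 (.inl (h.eq_of_write hdisj hrf_wf hx ▸ hco))
  · exact (hcom _ _).2 (.inr (.inr ((hfr _ _).2 ⟨w, h.rf_of_read hdisj hx, hco⟩)))

end IsSourceWrite

namespace LocationOrder

variable {x y z : E}

theorem isMem (hrf_wf : ∀ w r, rf w r → W w ∧ Rd r ∧ addr w = addr r)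
    (h : LocationOrder W Rd po co rf x y) : (W x ∨ Rd x) ∧ (W y ∨ Rd y) := by
  rcases h with ⟨_, _, hx, hy, _⟩ | ⟨_, hx, hy, _⟩ <;> exact ⟨hx.isMem hrf_wf, hy.isMem hrf_wf⟩

theorem irrefl (hdisj : ∀ e, ¬ (W e ∧ Rd e)) (hpo_irr : ∀ x, ¬ po x x) (hco_irr : ∀ x, ¬ co x x)
    (hrf_wf : ∀ w r, rf w r → W w ∧ Rd r ∧ addr w = addr r) (hrf_ex : ∀ r, Rd r → ∃! w, rf w r)
    (x : E) : ¬ LocationOrder W Rd po co rf x x := by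
  rintro (⟨wx, wx', hwx, hwx', hco⟩ | ⟨_, _, _, ⟨hW, hR⟩ | ⟨_, _, hpo⟩⟩)
  · exact hco_irr wx (hwx.unique hdisj hrf_wf hrf_ex hwx' ▸ hco)
  · exact hdisj x ⟨hW, hR⟩
  · exact hpo_irr x hpo

theorem trans (hdisj : ∀ e, ¬ (W e ∧ Rd e)) (hpo_trans : ∀ x y z, po x y → po y z → po x z)
    (hco_trans : ∀ x y z, co x y → co y z → co x z)
    (hrf_wf : ∀ w r, rf w r → W w ∧ Rd r ∧ addr w = addr r) (hrf_ex : ∀ r, Rd r → ∃! w, rf w r)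
    (hxy : LocationOrder W Rd po co rf x y) (hyz : LocationOrder W Rd po co rf y z) :
    LocationOrder W Rd po co rf x z := by
  have huniq {w w' : E} (h : IsSourceWrite W rf w y) (h' : IsSourceWrite W rf w' y) : w = w' :=
    h.unique hdisj hrf_wf hrf_ex h'
  rcases hxy with ⟨wx, wy, hwx, hwy, hco⟩ | ⟨w, hwx, hwy, hxy⟩ <;>
    rcases hyz with ⟨wy', wz, hwy', hwz, hco'⟩ | ⟨w', hwy', hwz, hyz⟩
  · exact .inl ⟨wx, wz, hwx, hwz, hco_trans _ _ _ hco (huniq hwy hwy' ▸ hco')⟩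
  · exact .inl ⟨wx, w', hwx, hwz, huniq hwy hwy' ▸ hco⟩
  · exact .inl ⟨w, wz, hwx, hwz, huniq hwy' hwy ▸ hco'⟩
  · obtain rfl := huniq hwy hwy'
    rcases hxy with ⟨hWx, hRy⟩ | ⟨hRx, hRy, hpo⟩ <;>
      rcases hyz with ⟨hWy, hRz⟩ | ⟨-, hRz, hpo'⟩
    · exact absurd ⟨hWy, hRy⟩ (hdisj y)
    · exact .inr ⟨w, hwx, hwz, .inl ⟨hWx, hRz⟩⟩
    · exact absurd ⟨hWy, hRy⟩ (hdisj y)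
    · exact .inr ⟨w, hwx, hwz, .inr ⟨hRx, hRz, hpo_trans _ _ _ hpo hpo'⟩⟩

theorem of_com (hco_wf : ∀ x y, co x y → W x ∧ W y ∧ addr x = addr y)
    (hrf_wf : ∀ w r, rf w r → W w ∧ Rd r ∧ addr w = addr r)
    (hfr : ∀ r w, fr r w ↔ ∃ w', rf w' r ∧ co w' w)
    (hcom : ∀ x y, com x y ↔ co x y ∨ rf x y ∨ fr x y) (h : com x y) :
    LocationOrder W Rd po co rf x y := by
  rcases (hcom x y).1 h with hco | hrf | hfr'
  · exact .inl ⟨x, y, .inl ⟨(hco_wf _ _ hco).1, rfl⟩, .inl ⟨(hco_wf _ _ hco).2.1, rfl⟩, hco⟩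
  · obtain ⟨hWx, hRy, -⟩ := hrf_wf _ _ hrf
    exact .inr ⟨x, .inl ⟨hWx, rfl⟩, .inr hrf, .inl ⟨hWx, hRy⟩⟩
  · obtain ⟨w, hrf, hco⟩ := (hfr x y).1 hfr'
    exact .inl ⟨w, y, .inr hrf, .inl ⟨(hco_wf _ _ hco).2.1, rfl⟩, hco⟩

theorem of_pol (hdisj : ∀ e, ¬ (W e ∧ Rd e)) (hpo_irr : ∀ x, ¬ po x x)
    (hco_total : ∀ x y, W x → W y → addr x = addr y → co x y ∨ x = y ∨ co y x)
    (hrf_wf : ∀ w r, rf w r → W w ∧ Rd r ∧ addr w = addr r) (hrf_ex : ∀ r, Rd r → ∃! w, rf w r)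
    (hfr : ∀ r w, fr r w ↔ ∃ w', rf w' r ∧ co w' w)
    (hcom : ∀ x y, com x y ↔ co x y ∨ rf x y ∨ fr x y)
    (hpol : ∀ x y, pol x y ↔ po x y ∧ addr x = addr y)
    (hsc : ∀ x y, pol x y → ¬ TransGen com y x) (h : pol x y) (hx : W x ∨ Rd x)
    (hy : W y ∨ Rd y) : LocationOrder W Rd po co rf x y := by
  obtain ⟨hpo, haddr⟩ := (hpol x y).1 h
  obtain ⟨wx, hwx⟩ := IsSourceWrite.exists_of_isMem hrf_ex hx
  obtain ⟨wy, hwy⟩ := IsSourceWrite.exists_of_isMem hrf_ex hy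
  have haddr_w : addr wx = addr wy := by
    rw [hwx.addr_eq hrf_wf, haddr, hwy.addr_eq hrf_wf]
  rcases hco_total wx wy (hwx.isWrite hrf_wf) (hwy.isWrite hrf_wf) haddr_w with hco | rfl | hco
  · exact .inl ⟨wx, wy, hwx, hwy, hco⟩
  · rcases hx with hWx | hRx <;> rcases hy with hWy | hRy
    · have hxy : x = y := (hwx.eq_of_write hdisj hrf_wf hWx).symm.trans
        (hwy.eq_of_write hdisj hrf_wf hWy)
      exact absurd (hxy ▸ hpo) (hpo_irr y)
    · exact .inr ⟨wx, hwx, hwy, .inl ⟨hWx, hRy⟩⟩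
    · have hrf : rf y x := hwy.eq_of_write hdisj hrf_wf hWy ▸ hwx.rf_of_read hdisj hRx
      exact absurd (.single ((hcom y x).2 (.inr (.inl hrf)))) (hsc x y h)
    · exact .inr ⟨wx, hwx, hwy, .inr ⟨hRx, hRy, hpo⟩⟩
  · exact absurd (TransGen.trans_left (.single (hwy.com_of_co hdisj hrf_wf hfr hcom hco))
      (hwx.reflTransGen_com hcom)) (hsc x y h)

end LocationOrder

end MemoryModel

theorem sc_per_location_2_implies_1_general {E A : Type*} (W Rd : E → Prop) (addr : E → A)
    (po co rf fr com pol : E → E → Prop)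
    (hdisj : ∀ e, ¬ (W e ∧ Rd e))
    (hpo_irr : ∀ x, ¬ po x x)
    (hpo_trans : ∀ x y z, po x y → po y z → po x z)
    (hco_irr : ∀ x, ¬ co x x)
    (hco_trans : ∀ x y z, co x y → co y z → co x z)
    (hco_wf : ∀ x y, co x y → W x ∧ W y ∧ addr x = addr y)
    (hco_total : ∀ x y, W x → W y → addr x = addr y → co x y ∨ x = y ∨ co y x)
    (hrf_wf : ∀ w r, rf w r → W w ∧ Rd r ∧ addr w = addr r)
    (hrf_ex : ∀ r, Rd r → ∃! w, rf w r)
    (hfr : ∀ r w, fr r w ↔ ∃ w', rf w' r ∧ co w' w)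
    (hcom : ∀ x y, com x y ↔ co x y ∨ rf x y ∨ fr x y)
    (hpol : ∀ x y, pol x y ↔ po x y ∧ addr x = addr y) :
    (∀ x y, pol x y → ¬ Relation.TransGen com y x) → ∀ x, ¬ Relation.TransGen (fun a b => pol a b ∨ com a b) x x := by
  intro hsc
  have hpol_trans (x y z : E) (hxy : pol x y) (hyz : pol y z) : pol x z := by
    obtain ⟨hpo, haddr⟩ := (hpol x y).1 hxy
    obtain ⟨hpo', haddr'⟩ := (hpol y z).1 hyz
    exact (hpol x z).2 ⟨hpo_trans _ _ _ hpo hpo', haddr.trans haddr'⟩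
  have hpol_irr (x : E) : ¬ pol x x := fun hx => hpo_irr x ((hpol x x).1 hx).1
  have hcom_le (x y : E) (h : com x y) : LocationOrder W Rd po co rf x y :=
    LocationOrder.of_com hco_wf hrf_wf hfr hcom h
  exact not_transGen_union_self (t := LocationOrder W Rd po co rf) (M := fun e => W e ∨ Rd e)
    hpol_trans hpol_irr (fun _ _ _ => LocationOrder.trans hdisj hpo_trans hco_trans hrf_wf hrf_ex)
    (LocationOrder.irrefl hdisj hpo_irr hco_irr hrf_wf hrf_ex) hcom_le
    (fun x y h => ((hcom_le x y h).isMem hrf_wf).1) (fun _ _ h => h.isMem hrf_wf)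
    (fun _ _ h => LocationOrder.of_pol hdisj hpo_irr hco_total hrf_wf hrf_ex hfr hcom hpol hsc h)

theorem sc_per_location_2_implies_1 {E A P : Type*} (W Rd : E → Prop) (addr : E → A) (proc : E → P)
    (po co rf fr com pol : E → E → Prop)
    (hdisj : ∀ e, ¬ (W e ∧ Rd e))
    (hpo_irr : ∀ x, ¬ po x x)
    (hpo_trans : ∀ x y z, po x y → po y z → po x z)
    (hpo_proc : ∀ x y, po x y → proc x = proc y)
    (hpo_total : ∀ x y, x ≠ y → proc x = proc y → po x y ∨ po y x)
    (hco_irr : ∀ x, ¬ co x x)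
    (hco_trans : ∀ x y z, co x y → co y z → co x z)
    (hco_wf : ∀ x y, co x y → W x ∧ W y ∧ addr x = addr y)
    (hco_total : ∀ x y, W x → W y → addr x = addr y → co x y ∨ x = y ∨ co y x)
    (hrf_wf : ∀ w r, rf w r → W w ∧ Rd r ∧ addr w = addr r)
    (hrf_ex : ∀ r, Rd r → ∃! w, rf w r)
    (hfr : ∀ r w, fr r w ↔ ∃ w', rf w' r ∧ co w' w)
    (hcom : ∀ x y, com x y ↔ co x y ∨ rf x y ∨ fr x y)
    (hpol : ∀ x y, pol x y ↔ po x y ∧ addr x = addr y) :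
    (∀ x y, pol x y → ¬ Relation.TransGen com y x) → ∀ x, ¬ Relation.TransGen (fun a b => pol a b ∨ com a b) x x :=
  sc_per_location_2_implies_1_general W Rd addr po co rf fr com pol hdisj hpo_irr hpo_trans hco_irr
    hco_trans hco_wf hco_total hrf_wf hrf_ex hfr hcom hpol
end

section
/- (Equivalence theorem.) The relation pol ∪ com is acyclic (i.e., its transitive closure is irreflexive) if and only if for all events x and y, pol x y implies ¬ com⁺ y x. -/
/-!
Rank a read by the pair (the write it reads from, `true`) and a write by (itself, `false`), and
compare ranks lexicographically, along `co` in the first component. On the accesses to one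
address this order is total, every `com` edge strictly raises the rank, and a strictly smaller
rank is always reached by a `com⁺` path. So if no `pol` edge is closed into a cycle by `com⁺`,
then `pol` edges between accesses never lower the rank. In a cycle of `pol ∪ com` containing a
`com` edge, runs of `pol` edges collapse to single edges between accesses by transitivity, so the
rank would strictly increase around the cycle.
-/

open Relation

theorem Relation.ReflGen.trans_rel {α : Type*} {r : α → α → Prop} [IsTrans α r] {a b c : α}
    (hab : ReflGen r a b) (hbc : r b c) : r a c := by
  cases hab with
  | refl => exact hbc
  | single hab => exact _root_.trans hab hbc

section Rank

variable {α β : Type*} {pol com : α → α → Prop} {M : α → Prop} {lt : β → β → Prop} {f : α → β}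

theorem transGen_or_cases [IsTrans α pol] [IsTrans β lt]
    (hcom : ∀ x y, com x y → M x ∧ M y ∧ lt (f x) (f y))
    (hpol : ∀ x y, pol x y → M x → M y → ReflGen lt (f x) (f y)) {a b : α}
    (h : TransGen (fun x y => pol x y ∨ com x y) a b) :
    pol a b ∨ ∃ c d, ReflGen pol a c ∧ M c ∧ M d ∧ lt (f c) (f d) ∧ ReflGen pol d b := by
  induction h with
  | single h =>
    rcases h with h | h
    · exact .inl h
    · obtain ⟨ha, hb, hab⟩ := hcom _ _ h
      exact .inr ⟨a, _, .refl, ha, hb, hab, .refl⟩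
  | @tail b b' _ h ih =>
    rcases ih with hab | ⟨c, d, hac, hc, hd, hcd, hdb⟩ <;> rcases h with h | h
    · exact .inl (_root_.trans hab h)
    · obtain ⟨hb, hb', hbb'⟩ := hcom _ _ h
      exact .inr ⟨b, b', .single hab, hb, hb', hbb', .refl⟩
    · exact .inr ⟨c, d, hac, hc, hd, hcd, .single (hdb.trans_rel h)⟩
    · obtain ⟨hb, hb', hbb'⟩ := hcom _ _ h
      have hdb' : ReflGen lt (f d) (f b) := by
        rcases hdb with _ | hdb
        exacts [.refl, hpol _ _ hdb hd hb]
      exact .inr ⟨c, b', hac, hc, hb', _root_.trans hcd (hdb'.trans_rel hbb'), .refl⟩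

theorem transGen_or_irrefl_of_rank [IsTrans α pol] [Std.Irrefl pol] [IsTrans β lt] [Std.Irrefl lt]
    (hcom : ∀ x y, com x y → M x ∧ M y ∧ lt (f x) (f y))
    (hpol : ∀ x y, pol x y → M x → M y → ReflGen lt (f x) (f y)) (a : α) :
    ¬ TransGen (fun x y => pol x y ∨ com x y) a a := by
  intro h
  rcases transGen_or_cases hcom hpol h with haa | ⟨c, d, hac, hc, hd, hcd, hda⟩
  · exact irrefl a haa
  · have hdc : ReflGen lt (f d) (f c) := by
      rcases _root_.trans hda hac with _ | hdc
      exacts [.refl, hpol _ _ hdc hd hc]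
    exact irrefl _ (hdc.trans_rel hcd)

end Rank

namespace Execution

variable {E A : Type*}

structure Wf (W Rd : E → Prop) (addr : E → A) (co rf : E → E → Prop) : Prop where
  disjoint : ∀ e, ¬ (W e ∧ Rd e)
  co_irrefl : ∀ x, ¬ co x x
  co_trans : ∀ x y z, co x y → co y z → co x z
  co_wf : ∀ x y, co x y → W x ∧ W y ∧ addr x = addr y
  co_total : ∀ x y, W x → W y → addr x = addr y → co x y ∨ x = y ∨ co y x
  rf_wf : ∀ w r, rf w r → W w ∧ Rd r ∧ addr w = addr r
  rf_existsUnique : ∀ r, Rd r → ∃! w, rf w r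

def fr (co rf : E → E → Prop) (r w : E) : Prop := ∃ w', rf w' r ∧ co w' w

def com (co rf : E → E → Prop) (x y : E) : Prop := co x y ∨ rf x y ∨ fr co rf x y

open Classical in
noncomputable def rank (rf : E → E → Prop) (e : E) : E × Bool :=
  if h : ∃ w, rf w e then (h.choose, true) else (e, false)

variable {W Rd : E → Prop} {addr : E → A} {co rf : E → E → Prop} {e r w x y : E}

theorem rank_fst_of_snd_eq_false (h : (rank rf e).2 = false) : (rank rf e).1 = e := by
  unfold rank at *
  split_ifs at *
  simp_all

theorem rf_rank_fst_of_snd_eq_true (h : (rank rf e).2 = true) : rf (rank rf e).1 e := by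
  unfold rank at *
  split_ifs at * with he
  exact he.choose_spec

theorem reflGen_rf_rank_fst (e : E) : ReflGen rf (rank rf e).1 e := by
  cases h : (rank rf e).2
  · rw [rank_fst_of_snd_eq_false h]
  · exact .single (rf_rank_fst_of_snd_eq_true h)

theorem com_of_co_rank_fst (h : co (rank rf x).1 y) : com co rf x y := by
  cases hx : (rank rf x).2
  · rw [rank_fst_of_snd_eq_false hx] at h
    exact .inl h
  · exact .inr (.inr ⟨_, rf_rank_fst_of_snd_eq_true hx, h⟩)

theorem transGen_com_of_rank_lt (h : Prod.Lex co (· < ·) (rank rf x) (rank rf y)) :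
    TransGen (com co rf) x y := by
  rcases Prod.lex_iff.1 h with h | ⟨hxy, hlt⟩
  · have hy : ReflGen (com co rf) (rank rf y).1 y :=
      (reflGen_rf_rank_fst y).mono fun _ _ h => .inr (.inl h)
    exact TransGen.head' (com_of_co_rank_fst h) hy.to_reflTransGen
  · obtain ⟨hx, hy⟩ := Bool.lt_iff.1 hlt
    rw [rank_fst_of_snd_eq_false hx] at hxy
    exact .single (.inr (.inl (hxy ▸ rf_rank_fst_of_snd_eq_true hy)))

namespace Wf

theorem rf_unique (hE : Wf W Rd addr co rf) {w w' r : E} (h : rf w r) (h' : rf w' r) :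
    w = w' :=
  (hE.rf_existsUnique r (hE.rf_wf w r h).2.1).unique h h'

theorem not_rf_of_write (hE : Wf W Rd addr co rf) (he : W e) (w : E) : ¬ rf w e :=
  fun h => hE.disjoint e ⟨he, (hE.rf_wf w e h).2.1⟩

theorem rank_of_write (hE : Wf W Rd addr co rf) (he : W e) : rank rf e = (e, false) :=
  dif_neg fun ⟨w, h⟩ => hE.not_rf_of_write he w h

theorem rank_of_rf (hE : Wf W Rd addr co rf) (h : rf w r) : rank rf r = (w, true) := by
  have hr : ∃ w, rf w r := ⟨w, h⟩
  rw [rank, dif_pos hr, hE.rf_unique hr.choose_spec h]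

theorem access_of_com (hE : Wf W Rd addr co rf) (h : com co rf x y) :
    (W x ∨ Rd x) ∧ (W y ∨ Rd y) := by
  rcases h with h | h | ⟨w, hw, h⟩
  · exact ⟨.inl (hE.co_wf x y h).1, .inl (hE.co_wf x y h).2.1⟩
  · exact ⟨.inl (hE.rf_wf x y h).1, .inr (hE.rf_wf x y h).2.1⟩
  · exact ⟨.inr (hE.rf_wf w x hw).2.1, .inl (hE.co_wf w y h).2.1⟩

theorem rank_lt_of_com (hE : Wf W Rd addr co rf) (h : com co rf x y) :
    Prod.Lex co (· < ·) (rank rf x) (rank rf y) := by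
  rcases h with h | h | ⟨w, hw, h⟩
  · obtain ⟨hx, hy, -⟩ := hE.co_wf x y h
    rw [hE.rank_of_write hx, hE.rank_of_write hy]
    exact .left _ _ h
  · rw [hE.rank_of_write (hE.rf_wf x y h).1, hE.rank_of_rf h]
    exact .right _ Bool.false_lt_true
  · rw [hE.rank_of_rf hw, hE.rank_of_write (hE.co_wf w y h).2.1]
    exact .left _ _ h

theorem write_rank_fst (hE : Wf W Rd addr co rf) (he : W e ∨ Rd e) :
    W (rank rf e).1 ∧ addr (rank rf e).1 = addr e := by
  rcases he with he | he
  · simp [hE.rank_of_write he, he]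
  · obtain ⟨w, hwe, -⟩ := hE.rf_existsUnique e he
    obtain ⟨hw, -, haddr⟩ := hE.rf_wf w e hwe
    simp [hE.rank_of_rf hwe, hw, haddr]

theorem rank_trichotomous (hE : Wf W Rd addr co rf) (hx : W x ∨ Rd x) (hy : W y ∨ Rd y)
    (haddr : addr x = addr y) :
    rank rf x = rank rf y ∨ Prod.Lex co (· < ·) (rank rf x) (rank rf y) ∨
      Prod.Lex co (· < ·) (rank rf y) (rank rf x) := by
  obtain ⟨hwx, hax⟩ := hE.write_rank_fst hx
  obtain ⟨hwy, hay⟩ := hE.write_rank_fst hy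
  rcases hE.co_total _ _ hwx hwy (by rw [hax, hay, haddr]) with h | h | h
  · exact .inr (.inl (.left _ _ h))
  · rcases lt_trichotomy (rank rf x).2 (rank rf y).2 with h2 | h2 | h2
    · exact .inr (.inl (Prod.lex_iff.2 (.inr ⟨h, h2⟩)))
    · exact .inl (Prod.ext h h2)
    · exact .inr (.inr (Prod.lex_iff.2 (.inr ⟨h.symm, h2⟩)))
  · exact .inr (.inr (.left _ _ h))

theorem rank_le_of_not_transGen_com (hE : Wf W Rd addr co rf) (hx : W x ∨ Rd x)
    (hy : W y ∨ Rd y) (haddr : addr x = addr y) (h : ¬ TransGen (com co rf) y x) :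
    ReflGen (Prod.Lex co (· < ·)) (rank rf x) (rank rf y) := by
  rcases hE.rank_trichotomous hx hy haddr with hxy | hxy | hyx
  · rw [hxy]
  · exact .single hxy
  · exact absurd (transGen_com_of_rank_lt hyx) h

end Wf

end Execution

theorem sc_per_location_equiv_general {E A : Type*} (W Rd : E → Prop) (addr : E → A)
    (po co rf fr com pol : E → E → Prop)
    (hdisj : ∀ e, ¬ (W e ∧ Rd e))
    (hpo_irr : ∀ x, ¬ po x x)
    (hpo_trans : ∀ x y z, po x y → po y z → po x z)
    (hco_irr : ∀ x, ¬ co x x)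
    (hco_trans : ∀ x y z, co x y → co y z → co x z)
    (hco_wf : ∀ x y, co x y → W x ∧ W y ∧ addr x = addr y)
    (hco_total : ∀ x y, W x → W y → addr x = addr y → co x y ∨ x = y ∨ co y x)
    (hrf_wf : ∀ w r, rf w r → W w ∧ Rd r ∧ addr w = addr r)
    (hrf_ex : ∀ r, Rd r → ∃! w, rf w r)
    (hfr : ∀ r w, fr r w ↔ ∃ w', rf w' r ∧ co w' w)
    (hcom : ∀ x y, com x y ↔ co x y ∨ rf x y ∨ fr x y)
    (hpol : ∀ x y, pol x y ↔ po x y ∧ addr x = addr y) :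
    (∀ x, ¬ Relation.TransGen (fun a b => pol a b ∨ com a b) x x) ↔ (∀ x y, pol x y → ¬ Relation.TransGen com y x) := by
  have hE : Execution.Wf W Rd addr co rf :=
    ⟨hdisj, hco_irr, hco_trans, hco_wf, hco_total, hrf_wf, hrf_ex⟩
  obtain rfl : fr = Execution.fr co rf := by ext r w; exact hfr r w
  obtain rfl : com = Execution.com co rf := by ext x y; exact hcom x y
  have : IsTrans E co := ⟨hco_trans⟩
  have : Std.Irrefl co := ⟨hco_irr⟩
  have : IsTrans E pol := ⟨fun x y z hxy hyz => (hpol x z).2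
    ⟨hpo_trans x y z ((hpol x y).1 hxy).1 ((hpol y z).1 hyz).1,
      ((hpol x y).1 hxy).2.trans ((hpol y z).1 hyz).2⟩⟩
  have : Std.Irrefl pol := ⟨fun x hx => hpo_irr x ((hpol x x).1 hx).1⟩
  constructor
  · intro hacyc x y hxy hyx
    exact hacyc x (.head (.inl hxy) (TransGen.mono (fun _ _ => .inr) _ _ hyx))
  · intro hsc
    refine transGen_or_irrefl_of_rank (M := fun e => W e ∨ Rd e) (f := Execution.rank rf)
      (lt := Prod.Lex co (· < ·)) ?_ ?_
    · exact fun x y hxy =>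
        ⟨(hE.access_of_com hxy).1, (hE.access_of_com hxy).2, hE.rank_lt_of_com hxy⟩
    · exact fun x y hxy hx hy =>
        hE.rank_le_of_not_transGen_com hx hy ((hpol x y).1 hxy).2 (hsc x y hxy)

theorem sc_per_location_equiv {E A P : Type*} (W Rd : E → Prop) (addr : E → A) (proc : E → P)
    (po co rf fr com pol : E → E → Prop)
    (hdisj : ∀ e, ¬ (W e ∧ Rd e))
    (hpo_irr : ∀ x, ¬ po x x)
    (hpo_trans : ∀ x y z, po x y → po y z → po x z)
    (hpo_proc : ∀ x y, po x y → proc x = proc y)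
    (hpo_total : ∀ x y, x ≠ y → proc x = proc y → po x y ∨ po y x)
    (hco_irr : ∀ x, ¬ co x x)
    (hco_trans : ∀ x y z, co x y → co y z → co x z)
    (hco_wf : ∀ x y, co x y → W x ∧ W y ∧ addr x = addr y)
    (hco_total : ∀ x y, W x → W y → addr x = addr y → co x y ∨ x = y ∨ co y x)
    (hrf_wf : ∀ w r, rf w r → W w ∧ Rd r ∧ addr w = addr r)
    (hrf_ex : ∀ r, Rd r → ∃! w, rf w r)
    (hfr : ∀ r w, fr r w ↔ ∃ w', rf w' r ∧ co w' w)
    (hcom : ∀ x y, com x y ↔ co x y ∨ rf x y ∨ fr x y)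
    (hpol : ∀ x y, pol x y ↔ po x y ∧ addr x = addr y) :
    (∀ x, ¬ Relation.TransGen (fun a b => pol a b ∨ com a b) x x) ↔ (∀ x y, pol x y → ¬ Relation.TransGen com y x) :=
  sc_per_location_equiv_general W Rd addr po co rf fr com pol hdisj hpo_irr hpo_trans hco_irr
    hco_trans hco_wf hco_total hrf_wf hrf_ex hfr hcom hpol
end
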